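/- Uniqueness of the equilibrium of the two-level model: if η₁, η₂ are positive semidefinite 2×2 complex matrices with Tr(η₁) + Tr(η₂) = 1 and 𝒦₁(η₁,η₂) = 0 and 𝒦₂(η₁,η₂) = 0, then η₁ = p(z₁⁺P₊ + z₁⁻P₋) and η₂ = (1−p)(z₂⁺P₊ + z₂⁻P₋). -/

import Mathlib

open Matrix
open scoped ComplexOrder

noncomputable section TwoLevel

def σm : Matrix (Fin 2) (Fin 2) ℂ := !![0, 0; 1, 0]
def σp : Matrix (Fin 2) (Fin 2) ℂ := !![0, 1; 0, 0]
def σz : Matrix (Fin 2) (Fin 2) ℂ := !![1, 0; 0, -1]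
def Pp : Matrix (Fin 2) (Fin 2) ℂ := !![1, 0; 0, 0]
def Pm : Matrix (Fin 2) (Fin 2) ℂ := !![0, 0; 0, 1]

/-- `𝒦₁` of the two-level model. -/
def K1 (γ₀ γ₁ γ₂ κ ω₁ : ℝ) (η₁ η₂ : Matrix (Fin 2) (Fin 2) ℂ) :
    Matrix (Fin 2) (Fin 2) ℂ :=
  (γ₀ : ℂ) • (σm * η₁ * σp - (1/2 : ℂ) • (Pp * η₁ + η₁ * Pp))
    + (γ₂ : ℂ) • (σp * η₂ * σm)
    - ((γ₁ : ℂ)/2) • (Pp * η₁ + η₁ * Pp)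
    - ((γ₀ : ℂ) * (κ : ℂ)) • η₁
    - (Complex.I * (ω₁ : ℂ) / 2) • (σz * η₁ - η₁ * σz)

/-- `𝒦₂` of the two-level model. -/
def K2 (γ₀ γ₁ γ₂ κ ω₂ : ℝ) (η₁ η₂ : Matrix (Fin 2) (Fin 2) ℂ) :
    Matrix (Fin 2) (Fin 2) ℂ :=
  (γ₀ : ℂ) • (σm * η₂ * σp - (1/2 : ℂ) • (Pp * η₂ + η₂ * Pp))
    + (γ₁ : ℂ) • (σm * η₁ * σp)
    - ((γ₂ : ℂ)/2) • (Pm * η₂ + η₂ * Pm)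
    + ((γ₀ : ℂ) * (κ : ℂ)) • η₁
    - (Complex.I * (ω₂ : ℂ) / 2) • (σz * η₂ - η₂ * σz)

/-- `κ₂ = γ₂κ/(γ₁+γ₀(1+κ))`. -/
def κ₂ (γ₀ γ₁ γ₂ κ : ℝ) : ℝ := γ₂ * κ / (γ₁ + γ₀ * (1 + κ))

/-- `z₁⁺ = κ₁/(1+κ₁)` with `κ₁ = κ`. -/
def z1p (κ : ℝ) : ℝ := κ / (1 + κ)

/-- `z₂⁺ = κ₂/(1+κ₂)`. -/
def z2p (γ₀ γ₁ γ₂ κ : ℝ) : ℝ := κ₂ γ₀ γ₁ γ₂ κ / (1 + κ₂ γ₀ γ₁ γ₂ κ)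

/-- `p = γ₂(1+κ)/(γ₂ + κ(γ₀+γ₁+γ₂) + κ²(γ₀+γ₂))`. -/
def peq (γ₀ γ₁ γ₂ κ : ℝ) : ℝ :=
  γ₂ * (1 + κ) / (γ₂ + κ * (γ₀ + γ₁ + γ₂) + κ ^ 2 * (γ₀ + γ₂))

/-- `η₁(∞) = p(z₁⁺P₊ + z₁⁻P₋)`. -/
def η1eq (γ₀ γ₁ γ₂ κ : ℝ) : Matrix (Fin 2) (Fin 2) ℂ :=
  (peq γ₀ γ₁ γ₂ κ : ℂ) • ((z1p κ : ℂ) • Pp + ((1 - z1p κ : ℝ) : ℂ) • Pm)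

/-- `η₂(∞) = (1−p)(z₂⁺P₊ + z₂⁻P₋)`. -/
def η2eq (γ₀ γ₁ γ₂ κ : ℝ) : Matrix (Fin 2) (Fin 2) ℂ :=
  ((1 - peq γ₀ γ₁ γ₂ κ : ℝ) : ℂ) •
    ((z2p γ₀ γ₁ γ₂ κ : ℂ) • Pp + ((1 - z2p γ₀ γ₁ γ₂ κ : ℝ) : ℂ) • Pm)

end TwoLevel

/-!
Written out entrywise, `𝒦₁` and `𝒦₂` act on each coherence (off-diagonal entry) by multiplication
with a complex rate of positive real part, up to a source term from the coherence of `η₁`, so all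
coherences vanish. On the populations the equations read `η₁ 0 0 = κ η₁ 1 1`,
`η₂ 0 0 = κ η₁ 0 0` and `γ₂ η₂ 1 1 = (γ₀ + γ₁ + γ₀κ) η₁ 0 0`; together with the trace condition
this determines them as `(γ₂κ, γ₂)` and `(γ₂κ², κ(γ₁ + γ₀(1 + κ)))` divided by their sum, the denominator of `p`.
-/

lemma Matrix.of_fin_two_eq_zero_iff {α : Type*} [Zero α] {a b c d : α} :
    !![a, b; c, d] = 0 ↔ a = 0 ∧ b = 0 ∧ c = 0 ∧ d = 0 := by
  simp [← Matrix.ext_iff, Fin.forall_fin_two, and_assoc]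

lemma eq_zero_of_mul_eq_zero_of_re_pos {c x : ℂ} (hc : 0 < c.re) (h : c * x = 0) : x = 0 :=
  (mul_eq_zero_iff_left (Complex.ne_zero_of_re_pos hc)).mp h

section Generator

variable (γ₀ γ₁ γ₂ κ : ℝ) (η₁ η₂ : Matrix (Fin 2) (Fin 2) ℂ)

lemma K1_eq (ω₁ : ℝ) : K1 γ₀ γ₁ γ₂ κ ω₁ η₁ η₂ =
    !![γ₂ * η₂ 1 1 - (γ₀ + γ₁ + γ₀ * κ) * η₁ 0 0,
        -(γ₀ / 2 + γ₁ / 2 + γ₀ * κ + Complex.I * ω₁) * η₁ 0 1;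
       -(γ₀ / 2 + γ₁ / 2 + γ₀ * κ - Complex.I * ω₁) * η₁ 1 0,
        γ₀ * η₁ 0 0 - γ₀ * κ * η₁ 1 1] := by
  ext i j
  fin_cases i <;> fin_cases j <;>
    simp [K1, σm, σp, Pp, σz, Matrix.mul_apply, Fin.sum_univ_two, vecMul, dotProduct] <;> ring

lemma K2_eq (ω₂ : ℝ) : K2 γ₀ γ₁ γ₂ κ ω₂ η₁ η₂ =
    !![γ₀ * κ * η₁ 0 0 - γ₀ * η₂ 0 0,
        γ₀ * κ * η₁ 0 1 - (γ₀ / 2 + γ₂ / 2 + Complex.I * ω₂) * η₂ 0 1;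
       γ₀ * κ * η₁ 1 0 - (γ₀ / 2 + γ₂ / 2 - Complex.I * ω₂) * η₂ 1 0,
        γ₀ * η₂ 0 0 + γ₁ * η₁ 0 0 - γ₂ * η₂ 1 1 + γ₀ * κ * η₁ 1 1] := by
  ext i j
  fin_cases i <;> fin_cases j <;>
    simp [K2, σm, σp, Pp, Pm, σz, Matrix.mul_apply, Fin.sum_univ_two, vecMul, dotProduct] <;> ring

end Generator

def peqDenom (γ₀ γ₁ γ₂ κ : ℝ) : ℝ := γ₂ + κ * (γ₀ + γ₁ + γ₂) + κ ^ 2 * (γ₀ + γ₂)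

section Equilibrium

variable {γ₀ γ₁ γ₂ κ : ℝ}

lemma peqDenom_pos (hγ₀ : 0 < γ₀) (hγ₁ : 0 < γ₁) (hγ₂ : 0 < γ₂) (hκ : 0 < κ) :
    0 < peqDenom γ₀ γ₁ γ₂ κ := by
  unfold peqDenom; positivity

lemma η1eq_eq (hκ : 0 < κ) : η1eq γ₀ γ₁ γ₂ κ =
    !![((γ₂ * κ / peqDenom γ₀ γ₁ γ₂ κ : ℝ) : ℂ), 0; 0, ((γ₂ / peqDenom γ₀ γ₁ γ₂ κ : ℝ) : ℂ)] := by
  have h1κ : 1 + κ ≠ 0 := by positivity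
  have hp_plus : peq γ₀ γ₁ γ₂ κ * z1p κ = γ₂ * κ / peqDenom γ₀ γ₁ γ₂ κ := by
    unfold peq z1p peqDenom; field_simp
  have hp_minus : peq γ₀ γ₁ γ₂ κ * (1 - z1p κ) = γ₂ / peqDenom γ₀ γ₁ γ₂ κ := by
    unfold peq z1p peqDenom; field_simp; ring
  rw [← hp_plus, ← hp_minus, η1eq, Pp, Pm]
  ext i j; fin_cases i <;> fin_cases j <;> simp

lemma η2eq_eq (hγ₀ : 0 < γ₀) (hγ₁ : 0 < γ₁) (hγ₂ : 0 < γ₂) (hκ : 0 < κ) : η2eq γ₀ γ₁ γ₂ κ =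
    !![((γ₂ * κ ^ 2 / peqDenom γ₀ γ₁ γ₂ κ : ℝ) : ℂ), 0;
       0, ((κ * (γ₁ + γ₀ * (1 + κ)) / peqDenom γ₀ γ₁ γ₂ κ : ℝ) : ℂ)] := by
  have hD : γ₂ + κ * (γ₀ + γ₁ + γ₂) + κ ^ 2 * (γ₀ + γ₂) ≠ 0 :=
    (peqDenom_pos hγ₀ hγ₁ hγ₂ hκ).ne'
  have hS : γ₁ + γ₀ * (1 + κ) ≠ 0 := by positivity
  have hSκ : γ₁ + γ₀ * (1 + κ) + γ₂ * κ ≠ 0 := by positivity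
  have hq_plus : (1 - peq γ₀ γ₁ γ₂ κ) * z2p γ₀ γ₁ γ₂ κ = γ₂ * κ ^ 2 / peqDenom γ₀ γ₁ γ₂ κ := by
    unfold peq z2p κ₂ peqDenom; field_simp; ring
  have hq_minus : (1 - peq γ₀ γ₁ γ₂ κ) * (1 - z2p γ₀ γ₁ γ₂ κ) =
      κ * (γ₁ + γ₀ * (1 + κ)) / peqDenom γ₀ γ₁ γ₂ κ := by
    unfold peq z2p κ₂ peqDenom; field_simp; ring
  rw [← hq_plus, ← hq_minus, η2eq, Pp, Pm]
  ext i j; fin_cases i <;> fin_cases j <;> simp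

end Equilibrium

section Stationary

variable {γ₀ γ₁ γ₂ κ ω₁ ω₂ : ℝ} {η₁ η₂ : Matrix (Fin 2) (Fin 2) ℂ}

lemma offDiag_eq_zero_of_stationary (hγ₀ : 0 < γ₀) (hγ₁ : 0 < γ₁) (hγ₂ : 0 < γ₂) (hκ : 0 < κ)
    (h₁ : K1 γ₀ γ₁ γ₂ κ ω₁ η₁ η₂ = 0) (h₂ : K2 γ₀ γ₁ γ₂ κ ω₂ η₁ η₂ = 0) :
    η₁ 0 1 = 0 ∧ η₁ 1 0 = 0 ∧ η₂ 0 1 = 0 ∧ η₂ 1 0 = 0 := by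
  rw [K1_eq, Matrix.of_fin_two_eq_zero_iff] at h₁
  rw [K2_eq, Matrix.of_fin_two_eq_zero_iff] at h₂
  obtain ⟨-, h₁01, h₁10, -⟩ := h₁
  obtain ⟨-, h₂01, h₂10, -⟩ := h₂
  rw [neg_mul, neg_eq_zero] at h₁01 h₁10
  have hη₁01 : η₁ 0 1 = 0 := eq_zero_of_mul_eq_zero_of_re_pos (by simp; positivity) h₁01
  have hη₁10 : η₁ 1 0 = 0 := eq_zero_of_mul_eq_zero_of_re_pos (by simp; positivity) h₁10
  simp only [hη₁01, hη₁10, mul_zero, zero_sub, neg_eq_zero] at h₂01 h₂10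
  exact ⟨hη₁01, hη₁10, eq_zero_of_mul_eq_zero_of_re_pos (by simp; positivity) h₂01,
    eq_zero_of_mul_eq_zero_of_re_pos (by simp; positivity) h₂10⟩

lemma diag_eq_of_stationary (hγ₀ : 0 < γ₀) (hγ₁ : 0 < γ₁) (hγ₂ : 0 < γ₂) (hκ : 0 < κ)
    (htr : η₁.trace + η₂.trace = 1)
    (h₁ : K1 γ₀ γ₁ γ₂ κ ω₁ η₁ η₂ = 0) (h₂ : K2 γ₀ γ₁ γ₂ κ ω₂ η₁ η₂ = 0) :
    η₁ 0 0 = ((γ₂ * κ / peqDenom γ₀ γ₁ γ₂ κ : ℝ) : ℂ) ∧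
    η₁ 1 1 = ((γ₂ / peqDenom γ₀ γ₁ γ₂ κ : ℝ) : ℂ) ∧
    η₂ 0 0 = ((γ₂ * κ ^ 2 / peqDenom γ₀ γ₁ γ₂ κ : ℝ) : ℂ) ∧
    η₂ 1 1 = ((κ * (γ₁ + γ₀ * (1 + κ)) / peqDenom γ₀ γ₁ γ₂ κ : ℝ) : ℂ) := by
  rw [K1_eq, Matrix.of_fin_two_eq_zero_iff] at h₁
  rw [K2_eq, Matrix.of_fin_two_eq_zero_iff] at h₂
  rw [Matrix.trace_fin_two, Matrix.trace_fin_two] at htr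
  obtain ⟨h₁00, -, -, h₁11⟩ := h₁
  obtain ⟨h₂00, -, -, -⟩ := h₂
  have hγ₀' : (γ₀ : ℂ) ≠ 0 := by exact_mod_cast hγ₀.ne'
  have hD : (peqDenom γ₀ γ₁ γ₂ κ : ℂ) ≠ 0 := by exact_mod_cast (peqDenom_pos hγ₀ hγ₁ hγ₂ hκ).ne'
  have h_ratio : η₁ 0 0 = κ * η₁ 1 1 := mul_left_cancel₀ hγ₀' (by linear_combination h₁11)
  have h_transfer : η₂ 0 0 = κ * η₁ 0 0 := mul_left_cancel₀ hγ₀' (by linear_combination -h₂00)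
  have h_norm : η₁ 1 1 * peqDenom γ₀ γ₁ γ₂ κ = γ₂ := by
    push_cast [peqDenom]
    linear_combination γ₂ * htr - (γ₂ + γ₂ * κ + γ₀ + γ₁ + γ₀ * κ) * h_ratio - γ₂ * h_transfer
      - h₁00
  simp only [Complex.ofReal_div, Complex.ofReal_mul, Complex.ofReal_pow, Complex.ofReal_add,
    Complex.ofReal_one, eq_div_iff hD]
  refine ⟨?_, h_norm, ?_, ?_⟩
  · linear_combination peqDenom γ₀ γ₁ γ₂ κ * h_ratio + κ * h_norm
  · linear_combination peqDenom γ₀ γ₁ γ₂ κ * (h_transfer + κ * h_ratio) + κ ^ 2 * h_norm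
  · apply mul_left_cancel₀ (show (γ₂ : ℂ) ≠ 0 by exact_mod_cast hγ₂.ne')
    linear_combination (peqDenom γ₀ γ₁ γ₂ κ : ℂ) * h₁00
      + (γ₀ + γ₁ + γ₀ * κ) * (peqDenom γ₀ γ₁ γ₂ κ * h_ratio + κ * h_norm)

end Stationary

theorem two_level_equilibrium_unique_general (γ₀ γ₁ γ₂ κ ω₁ ω₂ : ℝ)
    (hγ₀ : 0 < γ₀) (hγ₁ : 0 < γ₁) (hγ₂ : 0 < γ₂) (hκ : 0 < κ)
    (η₁ η₂ : Matrix (Fin 2) (Fin 2) ℂ)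
    (htr : η₁.trace + η₂.trace = 1)
    (heq₁ : K1 γ₀ γ₁ γ₂ κ ω₁ η₁ η₂ = 0)
    (heq₂ : K2 γ₀ γ₁ γ₂ κ ω₂ η₁ η₂ = 0) :
    η₁ = η1eq γ₀ γ₁ γ₂ κ ∧ η₂ = η2eq γ₀ γ₁ γ₂ κ := by
  obtain ⟨h₁01, h₁10, h₂01, h₂10⟩ := offDiag_eq_zero_of_stationary hγ₀ hγ₁ hγ₂ hκ heq₁ heq₂
  obtain ⟨h₁00, h₁11, h₂00, h₂11⟩ := diag_eq_of_stationary hγ₀ hγ₁ hγ₂ hκ htr heq₁ heq₂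
  rw [η1eq_eq hκ, η2eq_eq hγ₀ hγ₁ hγ₂ hκ, eta_fin_two η₁, eta_fin_two η₂]
  simp only [h₁00, h₁01, h₁10, h₁11, h₂00, h₂01, h₂10, h₂11, and_self]

/-- Uniqueness of the equilibrium of the two-level model: any pair of positive semidefinite
matrices with total trace `1` annihilated by `𝒦₁` and `𝒦₂` equals `(η₁(∞), η₂(∞))`. -/
theorem two_level_equilibrium_unique (γ₀ γ₁ γ₂ κ ω₁ ω₂ : ℝ)
    (hγ₀ : 0 < γ₀) (hγ₁ : 0 < γ₁) (hγ₂ : 0 < γ₂) (hκ : 0 < κ)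
    (η₁ η₂ : Matrix (Fin 2) (Fin 2) ℂ)
    (h₁ : η₁.PosSemidef) (h₂ : η₂.PosSemidef)
    (htr : η₁.trace + η₂.trace = 1)
    (heq₁ : K1 γ₀ γ₁ γ₂ κ ω₁ η₁ η₂ = 0)
    (heq₂ : K2 γ₀ γ₁ γ₂ κ ω₂ η₁ η₂ = 0) :
    η₁ = η1eq γ₀ γ₁ γ₂ κ ∧ η₂ = η2eq γ₀ γ₁ γ₂ κ :=
  two_level_equilibrium_unique_general γ₀ γ₁ γ₂ κ ω₁ ω₂ hγ₀ hγ₁ hγ₂ hκ η₁ η₂ htr heq₁ heq₂
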